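/- (Abstract form of Theorem 4.4.) Let N > M ≥ 0 and suppose the N×N real matrix M_X has a factorization M_X = V · [[Λ, R],[0, Θ]] · V⁻¹, where V is an invertible N×N real matrix, Λ is an M×M real diagonal matrix, Θ is an (N−M)×(N−M) real diagonal matrix, R is an M×(N−M) real matrix, and the separation γ := (minimum diagonal entry of Θ) − (maximum diagonal entry of Λ) is positive. Then M_X is diagonalizable over ℝ, and for any N×N real matrix Mᵉ and any complex eigenvalue μ of Mᵉ, dist(μ, σ(M_X)) ≤ (1 + ‖R‖/γ)² · ‖V‖ · ‖V⁻¹‖ · ‖M_X − Mᵉ‖. -/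

import Mathlib

open Matrix MeasureTheory Set Real
open scoped Matrix.Norms.L2Operator

/-!
Since the spectra of `Λ` and `Θ` are separated, the Sylvester equation `Y Θ - Λ Y = R` has the
solution `Y i j = R i j / (θ j - λ i)`, and `[[1, Y], [0, 1]]` conjugates `[[Λ, R], [0, Θ]]` to
`diag(Λ, Θ)`; so `M_X = U D U⁻¹` with `U = V [[1, Y], [0, 1]]`. The representation
`Y = ∫₀^∞ e^{tΛ} R e^{-tΘ} dt` gives `‖Y‖ ≤ ‖R‖ / γ`, hence
`‖U‖ ‖U⁻¹‖ ≤ (1 + ‖R‖ / γ)² ‖V‖ ‖V⁻¹‖`.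

The eigenvalue bound is then the Bauer–Fike theorem: if `μ` has distance `δ > 0` from every
`d i`, the resolvent `(μ - M_X)⁻¹ = U (μ - D)⁻¹ U⁻¹` has norm at most `‖U‖ ‖U⁻¹‖ / δ`, and
`μ - Mᵉ = (μ - M_X) + (M_X - Mᵉ)` would be invertible by a Neumann series if `‖M_X - Mᵉ‖` were
smaller than the inverse of that norm.
-/

/-- The multiset of complex eigenvalues (roots of the characteristic polynomial over `ℂ`)
of a real square matrix. -/
noncomputable def specC {n : ℕ} (A : Matrix (Fin n) (Fin n) ℝ) : Multiset ℂ :=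
  ((A.map (algebraMap ℝ ℂ)).charpoly).roots

namespace Matrix

variable {𝕜 : Type*} [RCLike 𝕜] {l m n o : Type*} [Fintype l] [Fintype m] [Fintype n] [Fintype o]
  [DecidableEq n] [DecidableEq o]

theorem l2_opNorm_le_of_sum_sq_le (A : Matrix m n 𝕜) {c : ℝ} (hc : 0 ≤ c)
    (h : ∀ v : n → 𝕜, ∑ i, ‖(A *ᵥ v) i‖ ^ 2 ≤ c ^ 2 * ∑ j, ‖v j‖ ^ 2) : ‖A‖ ≤ c := by
  refine ContinuousLinearMap.opNorm_le_bound _ hc fun x => ?_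
  rw [← sq_le_sq₀ (norm_nonneg _) (by positivity), mul_pow, EuclideanSpace.norm_sq_eq,
    EuclideanSpace.norm_sq_eq]
  exact h x.ofLp

theorem sum_sq_mulVec_le (A : Matrix m n 𝕜) (v : n → 𝕜) :
    ∑ i, ‖(A *ᵥ v) i‖ ^ 2 ≤ ‖A‖ ^ 2 * ∑ j, ‖v j‖ ^ 2 := by
  have h := pow_le_pow_left₀ (norm_nonneg _) (A.l2_opNorm_mulVec (WithLp.toLp 2 v)) 2
  rwa [mul_pow, EuclideanSpace.norm_sq_eq, EuclideanSpace.norm_sq_eq] at h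

theorem l2_opNorm_submatrix_equiv_le (A : Matrix m n 𝕜) (e : l ≃ m) (f : o ≃ n) :
    ‖A.submatrix e f‖ ≤ ‖A‖ := by
  refine l2_opNorm_le_of_sum_sq_le _ (norm_nonneg _) fun v => ?_
  have hmulVec : A.submatrix e f *ᵥ v = (A *ᵥ (v ∘ f.symm)) ∘ e := submatrix_mulVec_equiv ..
  calc ∑ i, ‖(A.submatrix e f *ᵥ v) i‖ ^ 2 = ∑ i, ‖(A *ᵥ (v ∘ f.symm)) i‖ ^ 2 := by
        rw [hmulVec]; exact e.sum_comp (fun i => ‖(A *ᵥ (v ∘ f.symm)) i‖ ^ 2)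
    _ ≤ ‖A‖ ^ 2 * ∑ j, ‖v (f.symm j)‖ ^ 2 := A.sum_sq_mulVec_le _
    _ = ‖A‖ ^ 2 * ∑ j, ‖v j‖ ^ 2 := by rw [f.symm.sum_comp (fun j => ‖v j‖ ^ 2)]

theorem l2_opNorm_reindex [DecidableEq l] [DecidableEq m] (e : m ≃ l) (f : n ≃ o)
    (A : Matrix m n 𝕜) : ‖reindex e f A‖ = ‖A‖ := by
  refine le_antisymm (l2_opNorm_submatrix_equiv_le _ _ _) ?_
  simpa using l2_opNorm_submatrix_equiv_le (reindex e f A) e f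

theorem l2_opNorm_diagonal_le {d : n → 𝕜} {c : ℝ} (hc : 0 ≤ c) (h : ∀ i, ‖d i‖ ≤ c) :
    ‖diagonal d‖ ≤ c := by
  rw [l2_opNorm_diagonal]
  exact pi_norm_le_iff_of_nonneg hc |>.2 h

theorem l2_opNorm_one_le : ‖(1 : Matrix n n 𝕜)‖ ≤ 1 := by
  rw [← diagonal_one]
  exact l2_opNorm_diagonal_le zero_le_one fun _ => norm_one.le

theorem l2_opNorm_fromBlocks_zero_le [DecidableEq m] (Y : Matrix m n 𝕜) :
    ‖(fromBlocks 0 Y 0 0 : Matrix (m ⊕ n) (m ⊕ n) 𝕜)‖ ≤ ‖Y‖ := by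
  refine l2_opNorm_le_of_sum_sq_le _ (norm_nonneg _) fun v => ?_
  have hmulVec : (fromBlocks 0 Y 0 0 : Matrix (m ⊕ n) (m ⊕ n) 𝕜) *ᵥ v =
      Sum.elim (Y *ᵥ (v ∘ Sum.inr)) (0 : n → 𝕜) := by
    rw [← Sum.elim_comp_inl_inr v, fromBlocks_mulVec]
    simp
  simp only [hmulVec, Fintype.sum_sum_type, Sum.elim_inl, Sum.elim_inr, Pi.zero_apply, norm_zero,
    ne_eq, OfNat.ofNat_ne_zero, not_false_eq_true, zero_pow, Finset.sum_const_zero, add_zero,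
    mul_add]
  exact le_add_of_nonneg_of_le (by positivity) (Y.sum_sq_mulVec_le (v ∘ Sum.inr))

theorem l2_opNorm_fromBlocks_one_le [DecidableEq m] (Y : Matrix m n 𝕜) :
    ‖(fromBlocks 1 Y 0 1 : Matrix (m ⊕ n) (m ⊕ n) 𝕜)‖ ≤ 1 + ‖Y‖ := by
  have : (fromBlocks 1 Y 0 1 : Matrix (m ⊕ n) (m ⊕ n) 𝕜) = 1 + fromBlocks 0 Y 0 0 := by
    simp [← fromBlocks_one, fromBlocks_add]
  rw [this]
  exact (norm_add_le _ _).trans (add_le_add l2_opNorm_one_le (l2_opNorm_fromBlocks_zero_le Y))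

theorem l2_opNorm_map_ofReal_le (A : Matrix m n ℝ) :
    ‖A.map (algebraMap ℝ ℂ)‖ ≤ ‖A‖ := by
  refine l2_opNorm_le_of_sum_sq_le _ (norm_nonneg _) fun v => ?_
  have hnorm_sq (z : ℂ) : ‖z‖ ^ 2 = ‖z.re‖ ^ 2 + ‖z.im‖ ^ 2 := by
    rw [Complex.sq_norm, Complex.normSq_apply, Real.norm_eq_abs, Real.norm_eq_abs, sq_abs, sq_abs]
    ring
  have hre (i) : ((A.map (algebraMap ℝ ℂ) *ᵥ v) i).re = (A *ᵥ fun j => (v j).re) i := by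
    simp [mulVec, dotProduct, Complex.re_sum]
  have him (i) : ((A.map (algebraMap ℝ ℂ) *ᵥ v) i).im = (A *ᵥ fun j => (v j).im) i := by
    simp [mulVec, dotProduct, Complex.im_sum]
  simp only [hnorm_sq, Finset.sum_add_distrib, hre, him, mul_add]
  exact add_le_add (A.sum_sq_mulVec_le _) (A.sum_sq_mulVec_le _)

end Matrix

theorem one_le_norm_inv_mul_norm_sub_of_not_isUnit {R : Type*} [NormedRing R]
    [HasSummableGeomSeries R] (u : Rˣ) {y : R} (hy : ¬IsUnit y) :
    1 ≤ ‖(↑u⁻¹ : R)‖ * ‖(u : R) - y‖ := by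
  have : Nontrivial R := ⟨⟨y, 1, fun h => hy (h ▸ isUnit_one)⟩⟩
  have hpos := Units.norm_pos u⁻¹
  by_contra! h
  refine hy (Units.ofNearby u y ?_).isUnit
  rw [norm_sub_rev, ← mul_one ‖(↑u⁻¹ : R)‖⁻¹, lt_inv_mul_iff₀ hpos]
  exact h

theorem conj_mul_conj {M : Type*} [Monoid M] {u v : M} (h : v * u = 1) (a b : M) :
    u * a * v * (u * b * v) = u * (a * b) * v := by
  simp only [mul_assoc, ← mul_assoc v u, h, one_mul]

theorem Matrix.algebraMap_sub_conj_diagonal {α n : Type*} [CommRing α] [Fintype n]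
    [DecidableEq n] {U : Matrix n n α} (hU : U * U⁻¹ = 1) (d : n → α) (μ : α) :
    algebraMap α _ μ - U * diagonal d * U⁻¹ = U * diagonal (fun j => μ - d j) * U⁻¹ := by
  have hcomm : U * algebraMap α _ μ * U⁻¹ = algebraMap α _ μ := by
    rw [← Algebra.commutes, mul_assoc, hU, mul_one]
  rw [← hcomm, ← sub_mul, ← mul_sub, algebraMap_eq_diagonal, ← diagonal_sub]
  rfl

theorem Matrix.exists_norm_sub_le_of_mem_spectrum {𝕜 n : Type*} [RCLike 𝕜] [Fintype n]
    [DecidableEq n] {A E U : Matrix n n 𝕜} {d : n → 𝕜} (hU : IsUnit U)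
    (hA : A = U * diagonal d * U⁻¹) {μ : 𝕜} (hμ : μ ∈ spectrum 𝕜 E) :
    ∃ i, ‖μ - d i‖ ≤ ‖U‖ * ‖U⁻¹‖ * ‖A - E‖ := by
  have : Nonempty n := by
    by_contra h
    rw [not_nonempty_iff] at h
    simp [spectrum.of_subsingleton] at hμ
  obtain ⟨i, -, hi⟩ := Finset.univ.exists_min_image (fun i => ‖μ - d i‖) Finset.univ_nonempty
  refine ⟨i, ?_⟩
  rcases eq_or_ne μ (d i) with rfl | hne
  · rw [sub_self, norm_zero]
    positivity
  have hδ : 0 < ‖μ - d i‖ := norm_pos_iff.2 (sub_ne_zero.2 hne)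
  have hsub_ne (j : n) : μ - d j ≠ 0 :=
    norm_pos_iff.1 (hδ.trans_le (hi j (Finset.mem_univ j)))
  have hUU : U * U⁻¹ = 1 := mul_nonsing_inv U ((isUnit_iff_isUnit_det U).1 hU)
  have hUU' : U⁻¹ * U = 1 := nonsing_inv_mul U ((isUnit_iff_isUnit_det U).1 hU)
  have hshift : algebraMap 𝕜 _ μ - A = U * diagonal (fun j => μ - d j) * U⁻¹ :=
    hA ▸ algebraMap_sub_conj_diagonal hUU d μ
  let resolvent : (Matrix n n 𝕜)ˣ :=
    { val := algebraMap 𝕜 _ μ - A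
      inv := U * diagonal (fun j => (μ - d j)⁻¹) * U⁻¹
      val_inv := by
        rw [hshift, conj_mul_conj hUU', diagonal_mul_diagonal]
        simp [mul_inv_cancel₀ (hsub_ne _), hUU]
      inv_val := by
        rw [hshift, conj_mul_conj hUU', diagonal_mul_diagonal]
        simp [inv_mul_cancel₀ (hsub_ne _), hUU] }
  have hres_norm : ‖(↑resolvent⁻¹ : Matrix n n 𝕜)‖ ≤ ‖U‖ * ‖μ - d i‖⁻¹ * ‖U⁻¹‖ := by
    refine (l2_opNorm_mul _ _).trans (mul_le_mul_of_nonneg_right ((l2_opNorm_mul _ _).trans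
      (mul_le_mul_of_nonneg_left ?_ (norm_nonneg _))) (norm_nonneg _))
    refine l2_opNorm_diagonal_le (by positivity) fun j => ?_
    rw [norm_inv]
    exact inv_anti₀ hδ (hi j (Finset.mem_univ j))
  have hone_le := one_le_norm_inv_mul_norm_sub_of_not_isUnit resolvent (spectrum.mem_iff.1 hμ)
  have hsub : (resolvent : Matrix n n 𝕜) - (algebraMap 𝕜 _ μ - E) = -(A - E) := by
    simp [resolvent]
  rw [hsub, norm_neg] at hone_le
  rw [← one_le_inv_mul₀ hδ]
  calc 1 ≤ ‖U‖ * ‖μ - d i‖⁻¹ * ‖U⁻¹‖ * ‖A - E‖ := hone_le.trans (by gcongr)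
    _ = _ := by ring

theorem mem_specC_iff {n : ℕ} (A : Matrix (Fin n) (Fin n) ℝ) (μ : ℂ) :
    μ ∈ specC A ↔ μ ∈ spectrum ℂ (A.map (algebraMap ℝ ℂ)) := by
  rw [specC, Polynomial.mem_roots (charpoly_monic _).ne_zero, mem_spectrum_iff_isRoot_charpoly]

theorem exists_mem_specC_norm_sub_le {n : ℕ} {A E U : Matrix (Fin n) (Fin n) ℝ} {d : Fin n → ℝ}
    (hU : IsUnit U) (hA : A = U * diagonal d * U⁻¹) {μ : ℂ} (hμ : μ ∈ specC E) :
    ∃ l ∈ specC A, ‖μ - l‖ ≤ ‖U‖ * ‖U⁻¹‖ * ‖A - E‖ := by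
  let f := (algebraMap ℝ ℂ).mapMatrix (m := Fin n)
  have hinv : f U⁻¹ = (f U)⁻¹ := by
    refine (inv_eq_right_inv ?_).symm
    rw [← map_mul, mul_nonsing_inv U ((isUnit_iff_isUnit_det U).1 hU), map_one]
  have hAc : f A = f U * diagonal (fun i => (d i : ℂ)) * (f U)⁻¹ := by
    rw [hA, map_mul, map_mul, hinv]
    simp [f, diagonal_map]
  obtain ⟨i, hi⟩ := exists_norm_sub_le_of_mem_spectrum (hU.map f) hAc ((mem_specC_iff _ _).1 hμ)
  refine ⟨d i, (mem_specC_iff _ _).2 ?_, hi.trans ?_⟩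
  · change _ ∈ spectrum ℂ (f A)
    rw [hAc, ← (hU.map f).unit_spec, ← coe_units_inv, spectrum.units_conjugate, spectrum_diagonal]
    exact ⟨i, rfl⟩
  · rw [← hinv, show E.map (algebraMap ℝ ℂ) = f E from rfl, ← map_sub]
    gcongr <;> exact l2_opNorm_map_ofReal_le _

section Sylvester

variable {m n : Type*}

def sylvesterSolution {K : Type*} [Field K] (lam : m → K) (θ : n → K) (R : Matrix m n K) :
    Matrix m n K :=
  of fun i j => R i j / (θ j - lam i)

variable [Fintype m] [Fintype n] [DecidableEq m] [DecidableEq n]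

theorem sylvesterSolution_mul_diagonal_sub_diagonal_mul {K : Type*} [Field K] {lam : m → K}
    {θ : n → K} (R : Matrix m n K) (h : ∀ i j, lam i ≠ θ j) :
    sylvesterSolution lam θ R * diagonal θ - diagonal lam * sylvesterSolution lam θ R = R := by
  ext i j
  have := sub_ne_zero.2 (h i j).symm
  simp only [Matrix.sub_apply, mul_diagonal, diagonal_mul, sylvesterSolution, of_apply]
  field_simp

theorem fromBlocks_one_mul_fromBlocks_one_neg {α : Type*} [Ring α] (Y : Matrix m n α) :
    (fromBlocks 1 Y 0 1 : Matrix (m ⊕ n) (m ⊕ n) α) * fromBlocks 1 (-Y) 0 1 = 1 := by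
  simp [fromBlocks_multiply, ← fromBlocks_one]

theorem fromBlocks_diagonal_eq_conj {α : Type*} [CommRing α] {lam : m → α} {θ : n → α}
    {R Y : Matrix m n α} (hY : Y * diagonal θ - diagonal lam * Y = R) :
    fromBlocks (diagonal lam) R 0 (diagonal θ) =
      fromBlocks 1 Y 0 1 * diagonal (Sum.elim lam θ) * fromBlocks 1 (-Y) 0 1 := by
  simp [← fromBlocks_diagonal, fromBlocks_multiply, ← hY, sub_eq_neg_add]

theorem integral_exp_neg_mul_Ioi_zero {b : ℝ} (hb : 0 < b) :
    ∫ t in Ioi (0 : ℝ), exp (-b * t) = b⁻¹ := by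
  rw [integral_exp_mul_Ioi (neg_lt_zero.2 hb) 0]
  simp

theorem l2_opNorm_diagonal_exp_mul_mul_diagonal_exp_le {lam : m → ℝ} {θ : n → ℝ}
    (R : Matrix m n ℝ) {α β : ℝ} (hlam : ∀ i, lam i ≤ α) (hθ : ∀ j, β ≤ θ j) {t : ℝ} (ht : 0 ≤ t) :
    ‖diagonal (fun i => exp (t * lam i)) * R * diagonal (fun j => exp (-(t * θ j)))‖ ≤
      ‖R‖ * exp (-(β - α) * t) := by
  calc _ ≤ exp (t * α) * ‖R‖ * exp (-(t * β)) := by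
        refine (l2_opNorm_mul _ _).trans (mul_le_mul ((l2_opNorm_mul _ _).trans ?_) ?_
          (norm_nonneg _) (by positivity))
        · gcongr
          refine l2_opNorm_diagonal_le (exp_nonneg _) fun i => ?_
          rw [norm_of_nonneg (exp_nonneg _)]
          gcongr
          exact hlam i
        · refine l2_opNorm_diagonal_le (exp_nonneg _) fun j => ?_
          rw [norm_of_nonneg (exp_nonneg _)]
          gcongr
          exact hθ j
    _ = ‖R‖ * exp (-(β - α) * t) := by
        rw [mul_right_comm, mul_comm, ← exp_add]
        ring_nf

theorem norm_sylvesterSolution_le (lam : m → ℝ) (θ : n → ℝ) (R : Matrix m n ℝ) {α β : ℝ}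
    (hlam : ∀ i, lam i ≤ α) (hθ : ∀ j, β ≤ θ j) (hαβ : α < β) :
    ‖sylvesterSolution lam θ R‖ ≤ ‖R‖ / (β - α) := by
  set F : ℝ → Matrix m n ℝ := fun t =>
    diagonal (fun i => exp (t * lam i)) * R * diagonal (fun j => exp (-(t * θ j)))
  have hF_apply (t : ℝ) (i : m) (j : n) : F t i j = R i j * exp (-(θ j - lam i) * t) := by
    simp only [F, mul_diagonal, diagonal_mul, mul_right_comm _ (R i j), ← exp_add]
    ring_nf
  have hF_norm (t : ℝ) (ht : 0 ≤ t) : ‖F t‖ ≤ ‖R‖ * exp (-(β - α) * t) :=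
    l2_opNorm_diagonal_exp_mul_mul_diagonal_exp_le R hlam hθ ht
  have hbound_int : IntegrableOn (fun t => ‖R‖ * exp (-(β - α) * t)) (Ioi 0) :=
    (exp_neg_integrableOn_Ioi 0 (sub_pos.2 hαβ)).const_mul _
  have hF_int : IntegrableOn F (Ioi 0) := by
    refine hbound_int.mono' (by fun_prop : Continuous F).aestronglyMeasurable ?_
    exact (ae_restrict_iff' measurableSet_Ioi).2 (.of_forall fun t ht => hF_norm t (le_of_lt ht))
  have hY : sylvesterSolution lam θ R = ∫ t in Ioi 0, F t := by
    ext i j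
    have := (entryLinearMap ℝ ℝ i j).toContinuousLinearMap.integral_comp_comm hF_int
    simp only [LinearMap.coe_toContinuousLinearMap', entryLinearMap_apply] at this
    rw [← this]
    have hgap : 0 < θ j - lam i := sub_pos.2 ((hlam i).trans_lt (hαβ.trans_le (hθ j)))
    simp only [hF_apply, integral_const_mul, integral_exp_neg_mul_Ioi_zero hgap,
      sylvesterSolution, of_apply, div_eq_mul_inv]
  calc ‖sylvesterSolution lam θ R‖ ≤ ∫ t in Ioi 0, ‖R‖ * exp (-(β - α) * t) := by
        rw [hY]
        exact norm_integral_le_of_norm_le hbound_int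
          ((ae_restrict_iff' measurableSet_Ioi).2 (.of_forall fun t ht => hF_norm t (le_of_lt ht)))
    _ = ‖R‖ / (β - α) := by
        rw [integral_const_mul, integral_exp_neg_mul_Ioi_zero (sub_pos.2 hαβ), div_eq_mul_inv]

theorem exists_isUnit_fromBlocks_diagonal_eq_conj (lam : m → ℝ) (θ : n → ℝ) (R : Matrix m n ℝ)
    {α β : ℝ} (hlam : ∀ i, lam i ≤ α) (hθ : ∀ j, β ≤ θ j) (hαβ : α < β) :
    ∃ W : Matrix (m ⊕ n) (m ⊕ n) ℝ, IsUnit W ∧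
      fromBlocks (diagonal lam) R 0 (diagonal θ) = W * diagonal (Sum.elim lam θ) * W⁻¹ ∧
      ‖W‖ ≤ 1 + ‖R‖ / (β - α) ∧ ‖W⁻¹‖ ≤ 1 + ‖R‖ / (β - α) := by
  set Y := sylvesterSolution lam θ R
  have hYnorm := norm_sylvesterSolution_le lam θ R hlam hθ hαβ
  have hinv : (fromBlocks 1 Y 0 1 : Matrix (m ⊕ n) (m ⊕ n) ℝ)⁻¹ = fromBlocks 1 (-Y) 0 1 :=
    inv_eq_right_inv (fromBlocks_one_mul_fromBlocks_one_neg Y)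
  refine ⟨fromBlocks 1 Y 0 1, .of_mul_eq_one _ (fromBlocks_one_mul_fromBlocks_one_neg Y), ?_, ?_, ?_⟩
  · rw [hinv]
    exact fromBlocks_diagonal_eq_conj <| sylvesterSolution_mul_diagonal_sub_diagonal_mul R
      fun i j => ((hlam i).trans_lt (hαβ.trans_le (hθ j))).ne
  · exact (l2_opNorm_fromBlocks_one_le Y).trans (by gcongr)
  · rw [hinv]
    exact (l2_opNorm_fromBlocks_one_le (-Y)).trans (by rw [norm_neg]; gcongr)

end Sylvester

/-- abstract form of Theorem 4.4: if `M_X = V·[[Λ,R],[0,Θ]]·V⁻¹` with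
`Λ, Θ` diagonal and the separation `γ = min Θ − max Λ` is positive, then `M_X` is
diagonalizable over `ℝ` and for any `Mᵉ` and complex eigenvalue `μ` of `Mᵉ`,
`dist(μ, σ(M_X)) ≤ (1 + ‖R‖/γ)²·‖V‖·‖V⁻¹‖·‖M_X − Mᵉ‖`. -/
theorem stmt12 {N M : ℕ} (hM : 0 < M) (hMN : M < N)
    (MX V : Matrix (Fin N) (Fin N) ℝ) (hV : IsUnit V)
    (lam : Fin M → ℝ) (θ : Fin (N - M) → ℝ)
    (R : Matrix (Fin M) (Fin (N - M)) ℝ)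
    (hfact : MX =
      V *
      (Matrix.reindex (finSumFinEquiv.trans (finCongr (Nat.add_sub_cancel' hMN.le)))
          (finSumFinEquiv.trans (finCongr (Nat.add_sub_cancel' hMN.le)))
          (Matrix.fromBlocks (Matrix.diagonal lam) R 0 (Matrix.diagonal θ))) *
      V⁻¹)
    (γ : ℝ)
    (hγ : γ = Finset.univ.inf' ⟨⟨0, Nat.sub_pos_of_lt hMN⟩, Finset.mem_univ _⟩ θ -
        Finset.univ.sup' ⟨⟨0, hM⟩, Finset.mem_univ _⟩ lam)
    (hγpos : 0 < γ) :
    (∃ (U : Matrix (Fin N) (Fin N) ℝ) (d : Fin N → ℝ),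
      IsUnit U ∧ MX = U * Matrix.diagonal d * U⁻¹) ∧
    ∀ (Mε : Matrix (Fin N) (Fin N) ℝ) (μ : ℂ), μ ∈ specC Mε →
      ∃ lam₀ ∈ specC MX,
        ‖μ - lam₀‖ ≤
          (1 + ‖R‖ / γ) ^ 2 * ‖V‖ * ‖V⁻¹‖ * ‖MX - Mε‖ := by
  set e := finSumFinEquiv.trans (finCongr (Nat.add_sub_cancel' hMN.le))
  obtain ⟨W, hW, hT, hWnorm, hWinvnorm⟩ := exists_isUnit_fromBlocks_diagonal_eq_conj lam θ R
    (fun i => Finset.le_sup' lam (Finset.mem_univ i))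
    (fun j => Finset.inf'_le θ (Finset.mem_univ j)) (sub_pos.1 (hγ ▸ hγpos))
  rw [← hγ] at hWnorm hWinvnorm
  set U := V * reindex e e W
  have hU : IsUnit U := hV.mul (hW.map (reindexAlgEquiv ℝ ℝ e))
  have hMX : MX = U * diagonal (Sum.elim lam θ ∘ e.symm) * U⁻¹ := by
    have hD : reindex e e (diagonal (Sum.elim lam θ)) = diagonal (Sum.elim lam θ ∘ e.symm) :=
      submatrix_diagonal_equiv _ _
    rw [hfact, hT, Matrix.mul_inv_rev, inv_reindex, ← hD]
    simp only [U, ← coe_reindexAlgEquiv ℝ ℝ, map_mul, mul_assoc]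
  have hnorm : ‖U‖ * ‖U⁻¹‖ ≤ (1 + ‖R‖ / γ) ^ 2 * ‖V‖ * ‖V⁻¹‖ := by
    rw [Matrix.mul_inv_rev, inv_reindex]
    calc ‖U‖ * ‖(reindex e e W⁻¹) * V⁻¹‖ ≤ (‖V‖ * ‖reindex e e W‖) * (‖reindex e e W⁻¹‖ * ‖V⁻¹‖) :=
          mul_le_mul (l2_opNorm_mul _ _) (l2_opNorm_mul _ _) (norm_nonneg _) (by positivity)
      _ ≤ (‖V‖ * (1 + ‖R‖ / γ)) * ((1 + ‖R‖ / γ) * ‖V⁻¹‖) := by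
          rw [l2_opNorm_reindex, l2_opNorm_reindex]
          gcongr
      _ = (1 + ‖R‖ / γ) ^ 2 * ‖V‖ * ‖V⁻¹‖ := by ring
  refine ⟨⟨U, _, hU, hMX⟩, fun Mε μ hμ => ?_⟩
  obtain ⟨l, hl, hle⟩ := exists_mem_specC_norm_sub_le hU hMX hμ
  exact ⟨l, hl, hle.trans (by gcongr)⟩
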